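/- Let A and B be lextensive categories and I a set. Then: (1) the coproduct functor ∐ : Aᴵ → A is a parametric right adjoint; (2) if Fᵢ : A → B for i ∈ I are parametric right adjoints, then the pointwise coproduct ∐ᵢFᵢ : A → B is a parametric right adjoint; (3) if φᵢ : Fᵢ → Gᵢ are cartesian natural transformations, then ∐ᵢφᵢ : ∐ᵢFᵢ → ∐ᵢGᵢ is cartesian. -/

import Mathlib

set_option linter.unusedSectionVars false

open CategoryTheory CategoryTheory.Limits

universe w v' v u' u

namespace Paper

/-- A functor `T : A ⥤ B` (with `A` having a terminal object) is a parametric right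
adjoint when the induced functor `A ≌ A/1 ⥤ B/T1` on slices has a left adjoint. -/
def IsPRA {A : Type u} {B : Type u'} [Category.{v} A] [Category.{v'} B] [HasTerminal A]
    (T : A ⥤ B) : Prop :=
  (Over.post (X := ⊤_ A) T).IsRightAdjoint

noncomputable instance piHasTerminal {I : Type w} {A : I → Type u}
    [∀ i, Category.{v} (A i)] [∀ i, HasTerminal (A i)] : HasTerminal (∀ i, A i) :=
  IsTerminal.hasTerminal (X := fun i => ⊤_ (A i))
    (IsTerminal.ofUniqueHom (fun Y => fun i => terminal.from (Y i))
      (fun _ m => funext fun i => terminal.hom_ext (m i) _))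


section
variable {A : Type u} [Category.{v} A] [HasCoproducts.{w} A]

/-- The canonical comparison functor `∏ᵢ A/Xᵢ ⥤ A/(∐ᵢXᵢ)` sending a family of maps to
their coproduct. -/
noncomputable def sliceComparison {I : Type w} (X : I → A) :
    (∀ i, Over (X i)) ⥤ Over (∐ X) where
  obj f := Over.mk (Sigma.desc (fun i => (f i).hom ≫ Sigma.ι X i))
  map {f g} h := Over.homMk (Limits.Sigma.map (fun i => (h i).left)) (by
    apply Limits.Sigma.hom_ext
    intro i
    simp)

/-- A category is lextensive when (in addition to finite limits and coproducts) the
comparison functors `∏ᵢ A/Xᵢ ⥤ A/(∐ᵢXᵢ)` are equivalences. -/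
def Lextensive (A : Type u) [Category.{v} A] [HasFiniteLimits A] [HasCoproducts.{w} A] :
    Prop :=
  ∀ {I : Type w} (X : I → A), (sliceComparison X).IsEquivalence

/-- The coproduct functor `Aᴵ ⥤ A`. -/
noncomputable def sigmaFunctor (I : Type w) (A : Type u) [Category.{v} A]
    [HasCoproducts.{w} A] : (∀ _ : I, A) ⥤ A where
  obj X := ∐ X
  map f := Limits.Sigma.map f
  map_id X := Limits.Sigma.map_id
  map_comp f g := (Limits.Sigma.map_comp_map f g).symm

/-- The pointwise coproduct of a family of functors. -/
noncomputable def ptwiseCoprod {I : Type w} {B : Type u'} [Category.{v'} B]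
    [HasCoproducts.{w} B] (F : I → (A ⥤ B)) : A ⥤ B :=
  Functor.pi' (fun i => F i) ⋙ sigmaFunctor I B

/-- A natural transformation is cartesian when all naturality squares are pullbacks. -/
def IsCartesianNT {C : Type u'} [Category.{v'} C] {F G : C ⥤ A} (α : F ⟶ G) : Prop :=
  ∀ {X Y : C} (f : X ⟶ Y), IsPullback (α.app X) (F.map f) (G.map f) (α.app Y)

/-- The coproduct of a family of natural transformations. -/
noncomputable def sigmaNat {I : Type w} {B : Type u'} [Category.{v'} B]
    [HasCoproducts.{w} B] {F G : I → (A ⥤ B)} (φ : ∀ i, F i ⟶ G i) :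
    ptwiseCoprod F ⟶ ptwiseCoprod G where
  app X := Limits.Sigma.map (fun i => (φ i).app X)
  naturality {X Y} f := by
    show Limits.Sigma.map (fun i => (F i).map f) ≫ Limits.Sigma.map (fun i => (φ i).app Y)
        = Limits.Sigma.map (fun i => (φ i).app X) ≫ Limits.Sigma.map (fun i => (G i).map f)
    rw [Limits.Sigma.map_comp_map, Limits.Sigma.map_comp_map]
    congr 1
    funext i
    exact ((φ i).naturality f)

end

end Paper

open Paper

/-! For lextensive `A`, slicing the coproduct functor `Aᴵ ⥤ A` over `X` is, modulo
`Aᴵ / X ≌ ∏ᵢ A / Xᵢ`, literally the comparison functor `∏ᵢ A / Xᵢ ⥤ A / ∐ X`, hence an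
equivalence. Slicing `∐ᵢ Fᵢ` over `1` is the tupling `A / 1 ⥤ ∏ᵢ B / Fᵢ 1` of the slices
`Fᵢ / 1`, which is a right adjoint (its left adjoint takes `(gᵢ)` to `∐ᵢ Lᵢ gᵢ`), followed by the
comparison equivalence for `B`. Finally, a family of pullback squares is a pullback in
`∏ᵢ B / Zᵢ`, and the comparison equivalence turns it into the coproduct square over `∐ Z`. -/

namespace CategoryTheory

universe w₁ u₁ v₁ u₂ v₂

section Pi

variable {I : Type w₁} {C : Type u₁} [Category.{v₁} C] {D : I → Type u₂}
  [∀ i, Category.{v₂} (D i)]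

lemma Functor.isRightAdjoint_pi' [HasCoproductsOfShape I C] (G : ∀ i, C ⥤ D i)
    [∀ i, (G i).IsRightAdjoint] : (Functor.pi' G).IsRightAdjoint :=
  let adj i := Adjunction.ofIsRightAdjoint (G i)
  (Adjunction.adjunctionOfEquivLeft
    (F_obj := fun d => ∐ fun i => (G i).leftAdjoint.obj (d i))
    (fun d c =>
      { toFun g i :=
          (adj i).homEquiv _ _ (Limits.Sigma.ι (fun j => (G j).leftAdjoint.obj (d j)) i ≫ g)
        invFun (h : ∀ i, d i ⟶ (G i).obj c) :=
          Limits.Sigma.desc fun i => ((adj i).homEquiv _ _).symm (h i)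
        left_inv g := by ext; simp
        right_inv h := funext fun i => by
          simp only [colimit.ι_desc, Cofan.mk_ι_app]
          exact Equiv.apply_symm_apply _ _ })
    (fun d c c' g h => funext fun i =>
      (congrArg _ (Category.assoc _ _ _).symm).trans
        ((adj i).homEquiv_naturality_right _ _))).isRightAdjoint

def Over.piEquivalence (X : ∀ i, D i) : Over X ≌ ∀ i, Over (X i) where
  functor :=
    { obj f i := Over.mk (f.hom i)
      map g i := Over.homMk (g.left i) (congrFun (Over.w g) i) }
  inverse :=
    { obj f := Over.mk (Y := fun i => (f i).left) fun i => (f i).hom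
      map g := Over.homMk (fun i => (g i).left) (funext fun i => Over.w (g i)) }
  unitIso := NatIso.ofComponents fun _ => Over.isoMk (Iso.refl _)
  counitIso := NatIso.ofComponents fun _ => Pi.isoMk fun i => Over.isoMk (Iso.refl _)

lemma IsPullback.pi {P X Y Z : ∀ i, D i}
    {fst : P ⟶ X} {snd : P ⟶ Y} {f : X ⟶ Z} {g : Y ⟶ Z}
    (h : ∀ i, IsPullback (fst i) (snd i) (f i) (g i)) : IsPullback fst snd f g :=
  .of_isLimit' ⟨funext fun i => (h i).w⟩ <| PullbackCone.IsLimit.mk _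
    (fun s i => (h i).lift (s.fst i) (s.snd i) (congrFun s.condition i))
    (fun _ => funext fun i => (h i).lift_fst _ _ _)
    (fun _ => funext fun i => (h i).lift_snd _ _ _)
    (fun _ _ hfst hsnd => funext fun i =>
      (h i).hom_ext ((congrFun hfst i).trans ((h i).lift_fst _ _ _).symm)
        ((congrFun hsnd i).trans ((h i).lift_snd _ _ _).symm))

end Pi

end CategoryTheory

namespace Paper

variable {I : Type w} {A : Type u} [Category.{v} A] [HasCoproducts.{w} A]

lemma post_sigmaFunctor (X : I → A) :
    Over.post (X := X) (sigmaFunctor I A) =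
      (Over.piEquivalence X).functor ⋙ sliceComparison X :=
  rfl

lemma isEquivalence_post_sigmaFunctor [HasFiniteLimits A] (hA : Lextensive A) (X : I → A) :
    (Over.post (X := X) (sigmaFunctor I A)).IsEquivalence := by
  have := hA X
  rw [post_sigmaFunctor]
  exact Functor.isEquivalence_trans _ (sliceComparison X)

variable {B : Type u'} [Category.{v'} B] [HasCoproducts.{w} B]

lemma post_ptwiseCoprod (F : I → A ⥤ B) (X : A) :
    Over.post (X := X) (ptwiseCoprod F) =
      Functor.pi' (fun i => Over.post (F i)) ⋙ sliceComparison (fun i => (F i).obj X) :=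
  rfl

lemma isRightAdjoint_post_ptwiseCoprod [HasFiniteLimits B] (hB : Lextensive B)
    (F : I → A ⥤ B) (X : A) [∀ i, (Over.post (X := X) (F i)).IsRightAdjoint] :
    (Over.post (X := X) (ptwiseCoprod F)).IsRightAdjoint := by
  have := hB fun i => (F i).obj X
  have := Functor.isRightAdjoint_pi' fun i => Over.post (X := X) (F i)
  rw [post_ptwiseCoprod]
  exact Functor.isRightAdjoint_comp (G := sliceComparison _)

lemma isPullback_sigmaMap [HasFiniteLimits B] (hB : Lextensive B) {W U V Z : I → B}
    {p : ∀ i, W i ⟶ U i} {q : ∀ i, W i ⟶ V i} {u : ∀ i, U i ⟶ Z i} {v : ∀ i, V i ⟶ Z i}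
    (h : ∀ i, IsPullback (p i) (q i) (u i) (v i)) :
    IsPullback (Limits.Sigma.map p) (Limits.Sigma.map q)
      (Limits.Sigma.map u) (Limits.Sigma.map v) := by
  have := hB Z
  have hOver : IsPullback (C := ∀ i, Over (Z i))
      (fun i => Over.homMk (p i) : (fun i => Over.mk (p i ≫ u i)) ⟶ fun i => Over.mk (u i))
      (fun i => Over.homMk (q i) (h i).w.symm :
        (fun i => Over.mk (p i ≫ u i)) ⟶ fun i => Over.mk (v i))
      (fun i => Over.homMk (u i) : (fun i => Over.mk (u i)) ⟶ fun i => Over.mk (𝟙 (Z i)))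
      (fun i => Over.homMk (v i) : (fun i => Over.mk (v i)) ⟶ fun i => Over.mk (𝟙 (Z i))) :=
    .pi fun i => .of_map (Over.forget _) (Over.OverMorphism.ext (h i).w) (h i)
  exact (hOver.map (sliceComparison Z)).map (Over.forget _)

end Paper

/-- Let `A` and `B` be lextensive categories and `I` a set.  Then:
(1) the coproduct functor `∐ : Aᴵ ⥤ A` is a parametric right adjoint;
(2) if `Fᵢ : A ⥤ B` are parametric right adjoints then the pointwise coproduct
`∐ᵢFᵢ : A ⥤ B` is a parametric right adjoint; and
(3) if `φᵢ : Fᵢ ⟶ Gᵢ` are cartesian natural transformations then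
`∐ᵢφᵢ : ∐ᵢFᵢ ⟶ ∐ᵢGᵢ` is cartesian. -/
theorem lextensive_coproducts_pra
    (I : Type w) (A : Type u) (B : Type u')
    [Category.{v} A] [Category.{v'} B]
    [HasFiniteLimits A] [HasCoproducts.{w} A] [HasFiniteLimits B] [HasCoproducts.{w} B]
    (hA : Paper.Lextensive A) (hB : Paper.Lextensive B) :
    Paper.IsPRA (Paper.sigmaFunctor I A) ∧
    (∀ F : I → (A ⥤ B), (∀ i, Paper.IsPRA (F i)) → Paper.IsPRA (Paper.ptwiseCoprod F)) ∧
    (∀ (F G : I → (A ⥤ B)) (φ : ∀ i, F i ⟶ G i),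
      (∀ i, Paper.IsCartesianNT (φ i)) → Paper.IsCartesianNT (Paper.sigmaNat φ)) := by
  refine ⟨?_, fun F hF => ?_, fun F G φ hφ X Y f => isPullback_sigmaMap hB fun i => hφ i f⟩
  · have := isEquivalence_post_sigmaFunctor hA (⊤_ (∀ _ : I, A))
    exact Functor.isRightAdjoint_of_isEquivalence
  · have : ∀ i, (Over.post (X := ⊤_ A) (F i)).IsRightAdjoint := hF
    exact isRightAdjoint_post_ptwiseCoprod hB F (⊤_ A)
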